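/- Let C ⊆ S_w be a connected configuration whose boundary positions are all nodes, and let v' ∈ C be a node not contained in any maximal barrier of C. Then the graph distance in C from the corner (0,0) to v' equals the Manhattan distance d_MH((0,0), v'); i.e., there is a monotone (north/east-step) path in C from (0,0) to v'. -/

import Mathlib

def Sq (w : ℤ) : Set (ℤ × ℤ) := {p | 0 ≤ p.1 ∧ p.1 ≤ w ∧ 0 ≤ p.2 ∧ p.2 ≤ w}

def dMH (p q : ℤ × ℤ) : ℤ := |p.1 - q.1| + |p.2 - q.2|

/-- An axis-aligned rectangle in ℤ². -/
def IsRect (R : Set (ℤ × ℤ)) : Prop :=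
  ∃ x₀ x₁ y₀ y₁ : ℤ, x₀ ≤ x₁ ∧ y₀ ≤ y₁ ∧
    R = {p : ℤ × ℤ | x₀ ≤ p.1 ∧ p.1 ≤ x₁ ∧ y₀ ≤ p.2 ∧ p.2 ≤ y₁}

/-- A barrier of a configuration `C` in the square `S_w`: a nonempty rectangle
contained in `S_w` each of whose columns and rows contains a hole
(a position of `S_w` not in `C`). -/
def IsBarrier (w : ℤ) (C R : Set (ℤ × ℤ)) : Prop :=
  R.Nonempty ∧ IsRect R ∧ R ⊆ Sq w ∧
    (∀ c : ℤ, (∃ p ∈ R, p.1 = c) → ∃ p ∈ R, p.1 = c ∧ p ∉ C) ∧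
    (∀ r : ℤ, (∃ p ∈ R, p.2 = r) → ∃ p ∈ R, p.2 = r ∧ p ∉ C)

/-- A maximal barrier: a barrier not properly contained in another barrier. -/
def IsMaxBarrier (w : ℤ) (C R : Set (ℤ × ℤ)) : Prop :=
  IsBarrier w C R ∧ ∀ R', IsBarrier w C R' → R ⊆ R' → R' = R

/-- A path of length `n` inside `C` from `u` to `v`. -/
def IsPathIn (C : Set (ℤ × ℤ)) (n : ℕ) (P : ℕ → ℤ × ℤ) (u v : ℤ × ℤ) : Prop :=
  P 0 = u ∧ P n = v ∧ (∀ i < n, dMH (P i) (P (i + 1)) = 1) ∧ ∀ i ≤ n, P i ∈ C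

/-- Graph distance within the configuration `C`. -/
noncomputable def gdist (C : Set (ℤ × ℤ)) (u v : ℤ × ℤ) : ℕ :=
  sInf {n : ℕ | ∃ P : ℕ → ℤ × ℤ, IsPathIn C n P u v}

/-!
If `v` cannot be reached from the corner by a monotone path, collect the positions reached from `v`
by left and down steps that leave only nodes. None of them is monotone reachable, and since the
bottom row and the left column consist of nodes, the lowest of them in each column and the leftmost
of them in each row is a hole. Hence their bounding box is a barrier containing `v`, and so is a
maximal barrier containing it.
-/

lemma dMH_triangle (a b c : ℤ × ℤ) : dMH a c ≤ dMH a b + dMH b c := by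
  unfold dMH
  linarith [abs_sub_le a.1 b.1 c.1, abs_sub_le a.2 b.2 c.2]

lemma dMH_origin {v : ℤ × ℤ} (h₁ : 0 ≤ v.1) (h₂ : 0 ≤ v.2) : dMH (0, 0) v = v.1 + v.2 := by
  simp [dMH, abs_of_nonneg h₁, abs_of_nonneg h₂]

namespace IsPathIn

variable {C : Set (ℤ × ℤ)} {n : ℕ} {P : ℕ → ℤ × ℤ} {u v : ℤ × ℤ}

lemma snoc (hP : IsPathIn C n P u v) {x : ℤ × ℤ} (hx : x ∈ C) (hvx : dMH v x = 1) :
    IsPathIn C (n + 1) (Function.update P (n + 1) x) u x := by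
  obtain ⟨h₀, hn, hstep, hmem⟩ := hP
  refine ⟨by simpa using h₀, by simp, fun i hi => ?_, fun i hi => ?_⟩
  · rcases Nat.lt_succ_iff_lt_or_eq.mp hi with hi | rfl
    · rw [Function.update_of_ne (by omega), Function.update_of_ne (by omega)]
      exact hstep i hi
    · rwa [Function.update_self, Function.update_of_ne (by omega), hn]
  · rcases Nat.le_succ_iff.mp hi with hi | rfl
    · rw [Function.update_of_ne (by omega)]
      exact hmem i hi
    · rwa [Function.update_self]

lemma dMH_le (hP : IsPathIn C n P u v) : dMH u v ≤ n := by
  induction n generalizing v with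
  | zero =>
    obtain ⟨h₀, rfl, -, -⟩ := hP
    simp [h₀, dMH]
  | succ n ih =>
    obtain ⟨h₀, rfl, hstep, hmem⟩ := hP
    have hinit : dMH u (P n) ≤ n :=
      ih ⟨h₀, rfl, fun i hi => hstep i (by omega), fun i hi => hmem i (by omega)⟩
    have := dMH_triangle u (P n) (P (n + 1))
    push_cast
    linarith [hstep n n.lt_succ_self]

lemma gdist_eq_dMH (hP : IsPathIn C n P u v) (hn : (n : ℤ) = dMH u v) :
    (gdist C u v : ℤ) = dMH u v := by
  obtain ⟨Q, hQ⟩ : ∃ Q, IsPathIn C (gdist C u v) Q u v :=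
    Nat.sInf_mem (s := {n | ∃ P, IsPathIn C n P u v}) ⟨n, P, hP⟩
  have hle : gdist C u v ≤ n := Nat.sInf_le ⟨P, hP⟩
  have := hQ.dMH_le
  omega

end IsPathIn

inductive MonoReach (C : Set (ℤ × ℤ)) : ℤ × ℤ → Prop
  | origin : (0, 0) ∈ C → MonoReach C (0, 0)
  | right {p : ℤ × ℤ} : MonoReach C p → (p.1 + 1, p.2) ∈ C → MonoReach C (p.1 + 1, p.2)
  | up {p : ℤ × ℤ} : MonoReach C p → (p.1, p.2 + 1) ∈ C → MonoReach C (p.1, p.2 + 1)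

namespace MonoReach

variable {C : Set (ℤ × ℤ)} {p : ℤ × ℤ}

lemma nonneg (h : MonoReach C p) : 0 ≤ p.1 ∧ 0 ≤ p.2 := by
  induction h with
  | origin => simp
  | right _ _ ih => exact ⟨by linarith [ih.1], ih.2⟩
  | up _ _ ih => exact ⟨ih.1, by linarith [ih.2]⟩

lemma exists_isPathIn (h : MonoReach C p) :
    ∃ (n : ℕ) (P : ℕ → ℤ × ℤ), IsPathIn C n P (0, 0) p ∧ (n : ℤ) = p.1 + p.2 := by
  induction h with
  | origin h₀ =>
    exact ⟨0, fun _ => (0, 0), ⟨rfl, rfl, fun i hi => absurd hi i.not_lt_zero, fun _ _ => h₀⟩,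
      by simp⟩
  | right _ hq ih =>
    obtain ⟨n, P, hP, hn⟩ := ih
    exact ⟨n + 1, _, hP.snoc hq (by simp [dMH]), by push_cast; linarith⟩
  | up _ hq ih =>
    obtain ⟨n, P, hP, hn⟩ := ih
    exact ⟨n + 1, _, hP.snoc hq (by simp [dMH]), by push_cast; linarith⟩

lemma gdist_eq_dMH (h : MonoReach C p) : (gdist C (0, 0) p : ℤ) = dMH (0, 0) p := by
  obtain ⟨n, P, hP, hn⟩ := h.exists_isPathIn
  exact hP.gdist_eq_dMH (by rw [hn, dMH_origin h.nonneg.1 h.nonneg.2])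

end MonoReach

section Boundary

variable {w : ℤ} {C : Set (ℤ × ℤ)} (hw : 0 ≤ w)
  (hbd : ∀ p ∈ Sq w, (p.1 = 0 ∨ p.1 = w ∨ p.2 = 0 ∨ p.2 = w) → p ∈ C)
include hw hbd

lemma monoReach_bottom {x : ℤ} (h₀ : 0 ≤ x) (hx : x ≤ w) : MonoReach C (x, 0) := by
  induction x, h₀ using Int.leInduction with
  | base => exact .origin (hbd _ ⟨le_rfl, hw, le_rfl, hw⟩ (by simp))
  | succ x hx₀ ih =>
    exact .right (ih (by omega)) (hbd _ ⟨by omega, hx, le_rfl, hw⟩ (by simp))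

lemma monoReach_left {y : ℤ} (h₀ : 0 ≤ y) (hy : y ≤ w) : MonoReach C (0, y) := by
  induction y, h₀ using Int.leInduction with
  | base => exact .origin (hbd _ ⟨le_rfl, hw, le_rfl, hw⟩ (by simp))
  | succ y hy₀ ih =>
    exact .up (ih (by omega)) (hbd _ ⟨le_rfl, hw, by omega, hy⟩ (by simp))

end Boundary

/-- Every step starts at a node of `C`, so only the position reached last may be a hole. -/
inductive LeftDownReach (C : Set (ℤ × ℤ)) (v : ℤ × ℤ) : ℤ × ℤ → Prop
  | refl : LeftDownReach C v v
  | left {p : ℤ × ℤ} : LeftDownReach C v p → p ∈ C → 0 < p.1 → LeftDownReach C v (p.1 - 1, p.2)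
  | down {p : ℤ × ℤ} : LeftDownReach C v p → p ∈ C → 0 < p.2 → LeftDownReach C v (p.1, p.2 - 1)

namespace LeftDownReach

variable {C : Set (ℤ × ℤ)} {v p : ℤ × ℤ}

lemma bounds (hv₁ : 0 ≤ v.1) (hv₂ : 0 ≤ v.2) (hp : LeftDownReach C v p) :
    0 ≤ p.1 ∧ p.1 ≤ v.1 ∧ 0 ≤ p.2 ∧ p.2 ≤ v.2 := by
  induction hp with
  | refl => exact ⟨hv₁, le_rfl, hv₂, le_rfl⟩
  | left _ _ h ih => exact ⟨by dsimp; omega, by dsimp; omega, ih.2.2⟩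
  | down _ _ h ih => exact ⟨ih.1, ih.2.1, by dsimp; omega, by dsimp; omega⟩

lemma not_monoReach (hv : ¬MonoReach C v) (hp : LeftDownReach C v p) : ¬MonoReach C p := by
  induction hp with
  | refl => exact hv
  | @left p _ hpC _ ih =>
    intro h
    have hp : ((p.1 - 1) + 1, p.2) = p := by simp
    exact ih (hp ▸ h.right (by rwa [hp]))
  | @down p _ hpC _ ih =>
    intro h
    have hp : (p.1, (p.2 - 1) + 1) = p := by simp
    exact ih (hp ▸ h.up (by rwa [hp]))

lemma exists_fst_eq (hp : LeftDownReach C v p) {x : ℤ} (h₁ : p.1 ≤ x) (h₂ : x ≤ v.1) :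
    ∃ y, LeftDownReach C v (x, y) := by
  induction hp with
  | refl =>
    obtain rfl := le_antisymm h₂ h₁
    exact ⟨v.2, .refl⟩
  | @left p hp hpC h ih =>
    rcases eq_or_lt_of_le h₁ with rfl | h₁
    · exact ⟨p.2, hp.left hpC h⟩
    · exact ih (by dsimp at h₁; omega)
  | down _ _ _ ih => exact ih h₁

lemma exists_snd_eq (hp : LeftDownReach C v p) {y : ℤ} (h₁ : p.2 ≤ y) (h₂ : y ≤ v.2) :
    ∃ x, LeftDownReach C v (x, y) := by
  induction hp with
  | refl =>
    obtain rfl := le_antisymm h₂ h₁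
    exact ⟨v.1, .refl⟩
  | left _ _ _ ih => exact ih h₁
  | @down p hp hpC h ih =>
    rcases eq_or_lt_of_le h₁ with rfl | h₁
    · exact ⟨p.1, hp.down hpC h⟩
    · exact ih (by dsimp at h₁; omega)

lemma exists_hole_same_column (hv₁ : 0 ≤ v.1) (hv₂ : 0 ≤ v.2) (hv : ¬MonoReach C v)
    (hbot : ∀ x, 0 ≤ x → x ≤ v.1 → MonoReach C (x, 0)) {x y : ℤ}
    (hxy : LeftDownReach C v (x, y)) : ∃ y', LeftDownReach C v (x, y') ∧ (x, y') ∉ C := by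
  obtain ⟨m, hm, hmin⟩ := Int.exists_least_of_bdd (P := fun y => LeftDownReach C v (x, y))
    ⟨0, fun y hy => (hy.bounds hv₁ hv₂).2.2.1⟩ ⟨y, hxy⟩
  refine ⟨m, hm, fun hmC => ?_⟩
  obtain ⟨hx₀, hxv, hm₀, -⟩ := hm.bounds hv₁ hv₂
  rcases hm₀.lt_or_eq with hm₀ | rfl
  · have := hmin _ (hm.down hmC hm₀)
    dsimp at this
    omega
  · exact hm.not_monoReach hv (hbot x hx₀ hxv)

lemma exists_hole_same_row (hv₁ : 0 ≤ v.1) (hv₂ : 0 ≤ v.2) (hv : ¬MonoReach C v)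
    (hleft : ∀ y, 0 ≤ y → y ≤ v.2 → MonoReach C (0, y)) {x y : ℤ}
    (hxy : LeftDownReach C v (x, y)) : ∃ x', LeftDownReach C v (x', y) ∧ (x', y) ∉ C := by
  obtain ⟨m, hm, hmin⟩ := Int.exists_least_of_bdd (P := fun x => LeftDownReach C v (x, y))
    ⟨0, fun x hx => (hx.bounds hv₁ hv₂).1⟩ ⟨x, hxy⟩
  refine ⟨m, hm, fun hmC => ?_⟩
  obtain ⟨hm₀, -, hy₀, hyv⟩ := hm.bounds hv₁ hv₂
  rcases hm₀.lt_or_eq with hm₀ | rfl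
  · have := hmin _ (hm.left hmC hm₀)
    dsimp at this
    omega
  · exact hm.not_monoReach hv (hleft y hy₀ hyv)

end LeftDownReach

theorem exists_isBarrier_mem_of_not_monoReach {w : ℤ} {C : Set (ℤ × ℤ)} {v : ℤ × ℤ}
    (hvw : v ∈ Sq w) (hv : ¬MonoReach C v)
    (hbot : ∀ x, 0 ≤ x → x ≤ v.1 → MonoReach C (x, 0))
    (hleft : ∀ y, 0 ≤ y → y ≤ v.2 → MonoReach C (0, y)) :
    ∃ R, IsBarrier w C R ∧ v ∈ R := by
  obtain ⟨hv₁, hv₁w, hv₂, hv₂w⟩ := hvw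
  have hbounds (p : ℤ × ℤ) (hp : LeftDownReach C v p) := hp.bounds hv₁ hv₂
  obtain ⟨_, ⟨p, hp, rfl⟩, hp_min⟩ :=
    Int.exists_least_of_bdd (P := fun x => ∃ p, LeftDownReach C v p ∧ p.1 = x)
      ⟨0, by rintro _ ⟨p, hp, rfl⟩; exact (hbounds p hp).1⟩ ⟨v.1, v, .refl, rfl⟩
  obtain ⟨_, ⟨q, hq, rfl⟩, hq_min⟩ :=
    Int.exists_least_of_bdd (P := fun y => ∃ q, LeftDownReach C v q ∧ q.2 = y)
      ⟨0, by rintro _ ⟨q, hq, rfl⟩; exact (hbounds q hq).2.2.1⟩ ⟨v.2, v, .refl, rfl⟩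
  set R : Set (ℤ × ℤ) := {r | p.1 ≤ r.1 ∧ r.1 ≤ v.1 ∧ q.2 ≤ r.2 ∧ r.2 ≤ v.2}
  have hvR : v ∈ R := ⟨(hbounds p hp).2.1, le_rfl, (hbounds q hq).2.2.2, le_rfl⟩
  have hmem (r : ℤ × ℤ) (hr : LeftDownReach C v r) : r ∈ R :=
    ⟨hp_min _ ⟨r, hr, rfl⟩, (hbounds r hr).2.1, hq_min _ ⟨r, hr, rfl⟩, (hbounds r hr).2.2.2⟩
  refine ⟨R, ⟨⟨v, hvR⟩, ⟨_, _, _, _, hvR.1, hvR.2.2.1, rfl⟩, ?_, ?_, ?_⟩, hvR⟩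
  · rintro r ⟨h₁, h₂, h₃, h₄⟩
    have := (hbounds p hp).1
    have := (hbounds q hq).2.2.1
    exact ⟨by omega, by omega, by omega, by omega⟩
  · rintro x ⟨r, ⟨h₁, h₂, -⟩, rfl⟩
    obtain ⟨y, hy⟩ := hp.exists_fst_eq h₁ h₂
    obtain ⟨y', hy', hhole⟩ := hy.exists_hole_same_column hv₁ hv₂ hv hbot
    exact ⟨_, hmem _ hy', rfl, hhole⟩
  · rintro y ⟨r, ⟨-, -, h₁, h₂⟩, rfl⟩
    obtain ⟨x, hx⟩ := hq.exists_snd_eq h₁ h₂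
    obtain ⟨x', hx', hhole⟩ := hx.exists_hole_same_row hv₁ hv₂ hv hleft
    exact ⟨_, hmem _ hx', rfl, hhole⟩

lemma finite_Sq (w : ℤ) : (Sq w).Finite := by
  have h : Sq w = Set.Icc (0, 0) (w, w) := by
    ext p
    simp only [Sq, Set.mem_Icc, Prod.le_def, Set.mem_ofPred_eq]
    tauto
  exact h ▸ Set.finite_Icc _ _

lemma IsBarrier.exists_isMaxBarrier_superset {w : ℤ} {C R : Set (ℤ × ℤ)} (h : IsBarrier w C R) :
    ∃ M, IsMaxBarrier w C M ∧ R ⊆ M := by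
  have hfin : {T | IsBarrier w C T ∧ R ⊆ T}.Finite :=
    (finite_Sq w).finite_subsets.subset fun T hT => hT.1.2.2.1
  obtain ⟨M, hM, hmax⟩ := hfin.exists_maximalFor id _ ⟨R, h, subset_rfl⟩
  exact ⟨M, ⟨hM.1, fun R' hR' hsub => le_antisymm (hmax ⟨hR', hM.2.trans hsub⟩ hsub) hsub⟩, hM.2⟩

theorem stmt10_general (w : ℤ) (hw : 0 ≤ w) (C : Set (ℤ × ℤ)) (hC : C ⊆ Sq w)
    (hbd : ∀ p ∈ Sq w, (p.1 = 0 ∨ p.1 = w ∨ p.2 = 0 ∨ p.2 = w) → p ∈ C)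
    (v' : ℤ × ℤ) (hv' : v' ∈ C)
    (hfree : ∀ M, IsMaxBarrier w C M → v' ∉ M) :
    (gdist C (0, 0) v' : ℤ) = dMH (0, 0) v' := by
  refine MonoReach.gdist_eq_dMH (by_contra fun hv => ?_)
  have hv'w : v' ∈ Sq w := hC hv'
  obtain ⟨R, hR, hv'R⟩ := exists_isBarrier_mem_of_not_monoReach hv'w hv
    (fun _ h₀ hx => monoReach_bottom hw hbd h₀ (hx.trans hv'w.2.1))
    (fun _ h₀ hy => monoReach_left hw hbd h₀ (hy.trans hv'w.2.2.2))
  obtain ⟨M, hM, hRM⟩ := hR.exists_isMaxBarrier_superset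
  exact hfree M hM (hRM hv'R)

/-- For a connected configuration whose boundary consists of nodes, the graph
distance from the corner (0,0) to any node not in a maximal barrier equals
the Manhattan distance. -/
theorem stmt10 (w : ℤ) (hw : 0 ≤ w) (C : Set (ℤ × ℤ)) (hC : C ⊆ Sq w)
    (hconn : ∀ u ∈ C, ∀ v ∈ C, ∃ (n : ℕ) (P : ℕ → ℤ × ℤ), IsPathIn C n P u v)
    (hbd : ∀ p ∈ Sq w, (p.1 = 0 ∨ p.1 = w ∨ p.2 = 0 ∨ p.2 = w) → p ∈ C)
    (v' : ℤ × ℤ) (hv' : v' ∈ C)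
    (hfree : ∀ M, IsMaxBarrier w C M → v' ∉ M) :
    (gdist C (0, 0) v' : ℤ) = dMH (0, 0) v' :=
  stmt10_general w hw C hC hbd v' hv' hfree
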